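/- For positive integers K, N let d_N^K denote the supremum over all real α of min_{K ≤ k ≤ K+N−1} ‖F_k α‖. For every fixed integer N ≥ 6, the limit as K → ∞ of d_N^K exists and equals 1/5. -/

import Mathlib

/-- Distance from a real number to the nearest integer. -/
noncomputable def distNearestInt (x : ℝ) : ℝ := |x - round x|

/-!
If six consecutive terms `F_K α, …, F_{K+5} α` all had fractional part in `(1/5, 4/5)`, then,
since `F_{k+2} α = F_k α + F_{k+1} α`, each fractional part would be the sum of the previous two,
possibly minus one; each of the sixteen resulting systems of linear inequalities is infeasible.
Hence `d_N^K ≤ 1/5` as soon as `N ≥ 6`.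

Conversely, take `α = (2 + φ) / 5`. By Binet, `F_k (2 + φ) = L_{k+1} - ψ^k` with the Lucas number
`L_{k+1} = 2 F_k + F_{k+1}`, and `L_{k+1} ≡ 3^k (mod 5)` is never divisible by `5`. So
`‖F_k α‖ ≥ 1/5 - |ψ|^k / 5`, which tends to `1/5`.
-/

open Real Int
open scoped goldenRatio

lemma distNearestInt_le_add_abs_sub (x y : ℝ) :
    distNearestInt x ≤ distNearestInt y + |x - y| :=
  calc distNearestInt x ≤ |x - round y| := round_le x (round y)
    _ ≤ |x - y| + |y - round y| := abs_sub_le _ _ _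
    _ = distNearestInt y + |x - y| := add_comm _ _

lemma inv_le_distNearestInt_natCast_div {q m : ℕ} (h : ¬ q ∣ m) :
    (q : ℝ)⁻¹ ≤ distNearestInt (m / q) := by
  rcases q.eq_zero_or_pos with rfl | hq
  · simp [distNearestInt]
  have hmod : 0 < m % q := Nat.pos_of_ne_zero (mt Nat.dvd_of_mod_eq_zero h)
  have := Nat.mod_lt m hq
  rw [distNearestInt, abs_sub_round_div_natCast_eq, inv_eq_one_div]
  gcongr
  exact_mod_cast Nat.one_le_iff_ne_zero.mpr (by omega)

lemma fract_add_eq_or {R : Type*} [Field R] [LinearOrder R] [IsStrictOrderedRing R] [FloorRing R]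
    (x y : R) : fract (x + y) = fract x + fract y ∨ fract (x + y) = fract x + fract y - 1 := by
  obtain ⟨z, hz⟩ := fract_add x y
  have hz0 : (z : R) ≤ 0 := by linarith [fract_add_le x y]
  have hz1 : (-1 : R) ≤ z := by linarith [fract_add_fract_le x y]
  obtain rfl | rfl : z = 0 ∨ z = -1 := by
    have := Int.cast_nonpos.mp hz0
    have : -1 ≤ z := by exact_mod_cast hz1
    omega
  · left; push_cast at hz; linarith
  · right; push_cast at hz; linarith

lemma not_forall_mem_Ioo_of_fibonacci_mod_one (t : ℕ → ℝ)
    (hrec : ∀ j, t (j + 2) = t j + t (j + 1) ∨ t (j + 2) = t j + t (j + 1) - 1) :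
    ¬ ∀ j ≤ 5, t j ∈ Set.Ioo (1 / 5) (4 / 5) := by
  intro ht
  have := ht 0 (by norm_num); have := ht 1 (by norm_num); have := ht 2 (by norm_num)
  have := ht 3 (by norm_num); have := ht 4 (by norm_num); have := ht 5 (by norm_num)
  simp only [Set.mem_Ioo] at *
  rcases hrec 0 with h2 | h2 <;> rcases hrec 1 with h3 | h3 <;> rcases hrec 2 with h4 | h4 <;>
    rcases hrec 3 with h5 | h5 <;> linarith

lemma exists_distNearestInt_le_of_fibonacci (x : ℕ → ℝ) (hx : ∀ j, x (j + 2) = x j + x (j + 1)) :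
    ∃ j ≤ 5, distNearestInt (x j) ≤ 1 / 5 := by
  by_contra! h
  refine not_forall_mem_Ioo_of_fibonacci_mod_one (fun j => fract (x j))
    (fun j => hx j ▸ fract_add_eq_or _ _) fun j hj => ?_
  have := h j hj
  rw [distNearestInt, abs_sub_round_eq_min, lt_min_iff] at this
  constructor <;> linarith

lemma inf'_Icc_distNearestInt_fib_mul_le (K N : ℕ) (hN : 6 ≤ N) (α : ℝ)
    (H : (Finset.Icc K (K + N - 1)).Nonempty) :
    (Finset.Icc K (K + N - 1)).inf' H (fun k => distNearestInt (Nat.fib k * α)) ≤ 1 / 5 := by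
  obtain ⟨j, hj, hle⟩ := exists_distNearestInt_le_of_fibonacci (fun j => Nat.fib (K + j) * α)
    fun j => by simp only [← add_assoc, Nat.fib_add_two, Nat.cast_add, add_mul]
  exact (Finset.inf'_le _ (Finset.mem_Icc.mpr ⟨by omega, by omega⟩)).trans hle

-- `x² - x - 1 ≡ (x - 3)² (mod 5)`: mod 5, the powers of `3` obey the Fibonacci recurrence.
lemma two_mul_fib_add_fib_succ_eq_three_pow_zmod_five (k : ℕ) :
    ((2 * Nat.fib k + Nat.fib (k + 1) : ℕ) : ZMod 5) = 3 ^ k := by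
  induction k using Nat.twoStepInduction with
  | zero => decide
  | one => decide
  | more k ih₀ ih₁ =>
    have h5 : (5 : ZMod 5) = 0 := rfl
    simp only [Nat.cast_add, Nat.cast_mul, Nat.fib_add_two] at *
    linear_combination ih₀ + ih₁ - 3 ^ k * h5

lemma not_five_dvd_two_mul_fib_add_fib_succ (k : ℕ) : ¬ 5 ∣ 2 * Nat.fib k + Nat.fib (k + 1) := by
  have : Fact (1 < 5) := ⟨by norm_num⟩
  rw [← ZMod.natCast_eq_zero_iff, two_mul_fib_add_fib_succ_eq_three_pow_zmod_five]
  exact ((IsUnit.of_mul_eq_one (a := (3 : ZMod 5)) 2 rfl).pow k).ne_zero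

lemma fib_mul_two_add_goldenRatio (k : ℕ) :
    (Nat.fib k : ℝ) * (2 + φ) = (2 * Nat.fib k + Nat.fib (k + 1) : ℕ) - ψ ^ k := by
  push_cast
  linear_combination -fib_succ_sub_goldenRatio_mul_fib k

lemma one_fifth_sub_le_distNearestInt_fib_mul (k : ℕ) :
    1 / 5 - |ψ| ^ k / 5 ≤ distNearestInt (Nat.fib k * ((2 + φ) / 5)) := by
  set L := 2 * Nat.fib k + Nat.fib (k + 1)
  have hL : ((5 : ℕ) : ℝ)⁻¹ ≤ distNearestInt (L / (5 : ℕ)) :=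
    inv_le_distNearestInt_natCast_div (not_five_dvd_two_mul_fib_add_fib_succ k)
  have hdist := distNearestInt_le_add_abs_sub (L / (5 : ℕ)) (Nat.fib k * ((2 + φ) / 5))
  have hdiff : (L : ℝ) / (5 : ℕ) - Nat.fib k * ((2 + φ) / 5) = ψ ^ k / 5 := by
    rw [← mul_div_assoc, fib_mul_two_add_goldenRatio]; push_cast [L]; ring
  rw [hdiff, abs_div, abs_pow, abs_of_pos (by norm_num : (0 : ℝ) < 5)] at hdist
  norm_num at hL
  linarith

theorem d_N_K_tendsto (N : ℕ) (hN : 6 ≤ N) :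
    Filter.Tendsto
      (fun K : ℕ => sSup {y : ℝ | ∃ α : ℝ,
        y = (Finset.Icc K (K + N - 1)).inf' (Finset.nonempty_Icc.mpr (by omega))
              (fun k => distNearestInt ((Nat.fib k : ℝ) * α))})
      Filter.atTop (nhds (1 / 5)) := by
  have hψ : |ψ| < 1 := abs_lt.mpr ⟨neg_one_lt_goldenConj, goldenConj_neg.trans one_pos⟩
  refine tendsto_of_tendsto_of_tendsto_of_le_of_le (g := fun K => 1 / 5 - |ψ| ^ K / 5) ?_
    tendsto_const_nhds (fun K => ?_) (fun K => ?_)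
  · simpa using tendsto_const_nhds.sub
      ((tendsto_pow_atTop_nhds_zero_of_lt_one (abs_nonneg ψ) hψ).div_const (5 : ℝ))
  · refine le_csSup_of_le ?_ ⟨(2 + φ) / 5, rfl⟩ (Finset.le_inf' _ _ fun k hk => ?_)
    · exact ⟨1 / 5, by rintro _ ⟨α, rfl⟩; exact inf'_Icc_distNearestInt_fib_mul_le K N hN α _⟩
    · have : |ψ| ^ k ≤ |ψ| ^ K :=
        pow_le_pow_of_le_one (abs_nonneg ψ) hψ.le (Finset.mem_Icc.mp hk).1
      linarith [one_fifth_sub_le_distNearestInt_fib_mul k]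
  · exact csSup_le ⟨_, 0, rfl⟩ fun _ ⟨α, hα⟩ => hα ▸ inf'_Icc_distNearestInt_fib_mul_le K N hN α _
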